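/- (Asymptotic variance corollary of Theorem 2) If P is a G-invariant probability distribution on Ω, then the variance under P of the single-sample Rao-Blackwell estimate is at most the variance of the single-sample indicator: Σ_{s ∈ Ω} P(s)·(H(s)/M)² − θ² ≤ Σ_{s ∈ Ω} P(s)·𝟙[s ∘ X̂ = x̂] − θ², where θ := Σ_{s : s ∘ X̂ = x̂} P(s). -/

import Mathlib

open scoped Classical
open Finset

/-- Action of a permutation of `Fin n` on an assignment `s : Fin n → V`:
`(g • s) i := s (g⁻¹ i)`. -/
def permAct {n : ℕ} {V : Type*} (g : Equiv.Perm (Fin n)) (s : Fin n → V) : Fin n → V :=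
  fun i => s (g⁻¹ i)

/-- Action of a permutation of `Fin n` on a tuple of indices `X : Fin k → Fin n`:
`(g • X) j := g (X j)`. -/
def tupleAct {n k : ℕ} (g : Equiv.Perm (Fin n)) (X : Fin k → Fin n) : Fin k → Fin n :=
  fun j => g (X j)

/-- The `G`-orbit of a tuple of indices, as a finset. -/
noncomputable def tupleOrbit {n k : ℕ} (G : Subgroup (Equiv.Perm (Fin n)))
    (X : Fin k → Fin n) : Finset (Fin k → Fin n) :=
  Finset.univ.filter (fun A => ∃ g ∈ G, tupleAct g X = A)

/-- The orbit Hamming weight of `s` w.r.t. the marginal assignment `X̂ = x̂`: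
the number of tuples `A` in the `G`-orbit of `X̂` with `s ∘ A = x̂`. -/
noncomputable def orbitHammingWeight {n k : ℕ} {V : Type*} [Fintype V] [DecidableEq V]
    (G : Subgroup (Equiv.Perm (Fin n))) (X : Fin k → Fin n) (xhat : Fin k → V)
    (s : Fin n → V) : ℕ :=
  ((tupleOrbit G X).filter (fun A => s ∘ A = xhat)).card

/-! The orbit Hamming weight divided by `M` is the average, over the `G`-orbit of `X̂`, of the
indicators `𝟙[s ∘ A = x̂]`. By `G`-invariance of `P` each of these indicators has mean `θ`, so the
Rao-Blackwell estimate is unbiased. Since it takes values in `[0, 1]`, its second moment is at most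
its mean `θ`, which is the second moment of the indicator `𝟙[s ∘ X̂ = x̂]`. -/

theorem sum_mul_sq_le_sum_mul_of_mem_Icc {ι : Type*} (t : Finset ι) (w f : ι → ℝ) (hw : ∀ i ∈ t, 0 ≤ w i)
    (hf : ∀ i ∈ t, f i ∈ Set.Icc (0 : ℝ) 1) :
    ∑ i ∈ t, w i * f i ^ 2 ≤ ∑ i ∈ t, w i * f i := by
  refine sum_le_sum fun i hi => mul_le_mul_of_nonneg_left ?_ (hw i hi)
  obtain ⟨hf0, hf1⟩ := hf i hi
  nlinarith

theorem permAct_comp_tupleAct {n k : ℕ} {V : Type*} (g : Equiv.Perm (Fin n)) (s : Fin n → V)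
    (X : Fin k → Fin n) : permAct g s ∘ tupleAct g X = s ∘ X := by
  funext j
  simp [permAct, tupleAct]

section TupleOrbit

variable {n k : ℕ} {V : Type*} [Fintype V] [DecidableEq V]
  (G : Subgroup (Equiv.Perm (Fin n))) (X : Fin k → Fin n) (x : Fin k → V)

theorem mem_tupleOrbit_self : X ∈ tupleOrbit G X := by
  simp only [tupleOrbit, mem_filter, mem_univ, true_and]
  exact ⟨1, G.one_mem, rfl⟩

theorem tupleOrbit_card_pos : 0 < (tupleOrbit G X).card :=
  card_pos.mpr ⟨X, mem_tupleOrbit_self G X⟩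

theorem orbitHammingWeight_le_card_tupleOrbit (s : Fin n → V) :
    orbitHammingWeight G X x s ≤ (tupleOrbit G X).card :=
  card_filter_le _ _

theorem sum_filter_comp_tupleAct_eq {β : Type*} [AddCommMonoid β] (P : (Fin n → V) → β)
    (g : Equiv.Perm (Fin n)) (hPg : ∀ s, P (permAct g s) = P s) :
    ∑ s ∈ univ.filter (fun s : Fin n → V => s ∘ tupleAct g X = x), P s =
      ∑ s ∈ univ.filter (fun s : Fin n → V => s ∘ X = x), P s := by
  symm
  refine sum_nbij' (permAct g) (permAct g⁻¹) ?_ ?_ ?_ ?_ fun s _ => (hPg s).symm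
  · intro s hs
    simpa [permAct_comp_tupleAct] using hs
  · intro s hs
    simp only [mem_filter, mem_univ, true_and] at hs ⊢
    rw [← hs]
    funext j
    simp [permAct, tupleAct]
  all_goals intro s _; funext i; simp [permAct]

theorem sum_mul_orbitHammingWeight {R : Type*} [CommSemiring R] (P : (Fin n → V) → R)
    (hPG : ∀ g ∈ G, ∀ s, P (permAct g s) = P s) :
    ∑ s, P s * (orbitHammingWeight G X x s : R) =
      (tupleOrbit G X).card * ∑ s ∈ univ.filter (fun s : Fin n → V => s ∘ X = x), P s := by
  have hmass : ∀ A ∈ tupleOrbit G X,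
      ∑ s ∈ univ.filter (fun s : Fin n → V => s ∘ A = x), P s =
        ∑ s ∈ univ.filter (fun s : Fin n → V => s ∘ X = x), P s := by
    intro A hA
    obtain ⟨g, hg, rfl⟩ := (mem_filter.mp hA).2
    exact sum_filter_comp_tupleAct_eq X x P g (hPG g hg)
  calc ∑ s, P s * (orbitHammingWeight G X x s : R)
      = ∑ A ∈ tupleOrbit G X, ∑ s ∈ univ.filter (fun s : Fin n → V => s ∘ A = x), P s := by
        simp only [orbitHammingWeight, card_filter, Nat.cast_sum, mul_sum, sum_filter]
        rw [sum_comm]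
        simp only [Nat.cast_ite, Nat.cast_one, Nat.cast_zero, mul_ite, mul_one, mul_zero]
    _ = (tupleOrbit G X).card * ∑ s ∈ univ.filter (fun s : Fin n → V => s ∘ X = x), P s := by
        rw [sum_congr rfl hmass, sum_const, nsmul_eq_mul]

theorem sum_mul_orbitHammingWeight_div_card (P : (Fin n → V) → ℝ)
    (hPG : ∀ g ∈ G, ∀ s, P (permAct g s) = P s) :
    ∑ s, P s * ((orbitHammingWeight G X x s : ℝ) / (tupleOrbit G X).card) =
      ∑ s ∈ univ.filter (fun s : Fin n → V => s ∘ X = x), P s := by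
  have hM : ((tupleOrbit G X).card : ℝ) ≠ 0 := by exact_mod_cast (tupleOrbit_card_pos G X).ne'
  simp only [mul_div_assoc', ← sum_div, sum_mul_orbitHammingWeight G X x P hPG]
  field_simp

theorem orbitHammingWeight_div_card_mem_Icc (s : Fin n → V) :
    (orbitHammingWeight G X x s : ℝ) / (tupleOrbit G X).card ∈ Set.Icc (0 : ℝ) 1 := by
  have hM : (0 : ℝ) < (tupleOrbit G X).card := by exact_mod_cast tupleOrbit_card_pos G X
  refine ⟨by positivity, (div_le_one hM).mpr ?_⟩
  exact_mod_cast orbitHammingWeight_le_card_tupleOrbit G X x s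

end TupleOrbit

theorem rao_blackwell_variance_le_standard_variance_general
    (n k : ℕ)
    (V : Type*) [Fintype V] [DecidableEq V]
    (G : Subgroup (Equiv.Perm (Fin n)))
    (Xhat : Fin k → Fin n)
    (xhat : Fin k → V)
    (P : (Fin n → V) → ℝ)
    (hP0 : ∀ s, 0 ≤ P s)
    (hPG : ∀ g ∈ G, ∀ s : Fin n → V, P (permAct g s) = P s) :
    (∑ s : Fin n → V,
        P s * ((orbitHammingWeight G Xhat xhat s : ℝ) /
            ((tupleOrbit G Xhat).card : ℝ)) ^ 2) -
        (∑ s ∈ Finset.univ.filter (fun s : Fin n → V => s ∘ Xhat = xhat), P s) ^ 2 ≤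
      (∑ s : Fin n → V, P s * (if s ∘ Xhat = xhat then (1 : ℝ) else 0)) -
        (∑ s ∈ Finset.univ.filter (fun s : Fin n → V => s ∘ Xhat = xhat), P s) ^ 2 := by
  have hindicator : ∑ s : Fin n → V, P s * (if s ∘ Xhat = xhat then (1 : ℝ) else 0) =
      ∑ s ∈ univ.filter (fun s : Fin n → V => s ∘ Xhat = xhat), P s := by
    simp only [mul_ite, mul_one, mul_zero, sum_filter]
  have hsecond := sum_mul_sq_le_sum_mul_of_mem_Icc univ P
    (fun s => (orbitHammingWeight G Xhat xhat s : ℝ) / (tupleOrbit G Xhat).card)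
    (fun s _ => hP0 s) (fun s _ => orbitHammingWeight_div_card_mem_Icc G Xhat xhat s)
  rw [sum_mul_orbitHammingWeight_div_card G Xhat xhat P hPG] at hsecond
  rw [hindicator]
  linarith

/-- asymptotic variance corollary of Theorem 2: the variance under `P` of
the single-sample Rao-Blackwell estimate is at most the variance of the single-sample
indicator. -/
theorem rao_blackwell_variance_le_standard_variance
    (n k : ℕ) (hn : 0 < n) (hk : 0 < k)
    (V : Type*) [Fintype V] [Nonempty V] [DecidableEq V]
    (G : Subgroup (Equiv.Perm (Fin n)))
    (Xhat : Fin k → Fin n) (hX : Function.Injective Xhat)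
    (xhat : Fin k → V)
    (P : (Fin n → V) → ℝ)
    (hP0 : ∀ s, 0 ≤ P s)
    (hP1 : ∑ s : Fin n → V, P s = 1)
    (hPG : ∀ g ∈ G, ∀ s : Fin n → V, P (permAct g s) = P s) :
    (∑ s : Fin n → V,
        P s * ((orbitHammingWeight G Xhat xhat s : ℝ) /
            ((tupleOrbit G Xhat).card : ℝ)) ^ 2) -
        (∑ s ∈ Finset.univ.filter (fun s : Fin n → V => s ∘ Xhat = xhat), P s) ^ 2 ≤
      (∑ s : Fin n → V, P s * (if s ∘ Xhat = xhat then (1 : ℝ) else 0)) -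
        (∑ s ∈ Finset.univ.filter (fun s : Fin n → V => s ∘ Xhat = xhat), P s) ^ 2 :=
  rao_blackwell_variance_le_standard_variance_general n k V G Xhat xhat P hP0 hPG
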